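/- arXiv:1812.00368 — 2 statements merged into one kernel-verified Lean document; each statement's English description precedes it below -/
import Mathlib

section
/- Let W be a skew-weighing matrix W(n,m), let α ∈ F_q, and let G = [W + α·I_n | I_n] over F_q. If m + α² + 1 ≠ 0 in F_q, then G generates an LCD code C of length 2n and dimension n over F_q. Moreover, if in addition m + α² ≠ 0 in F_q and β ∈ F_q satisfies β + α² + m = 0, then Ḡ = [W + α·I_n | β·I_n] generates the dual code C⊥. -/
open Matrix BigOperators

/-- The row span of a matrix `G`: the linear code generated by the rows of `G`. -/
def rowSpan (F : Type*) [Field F] {k ι : Type*} (G : Matrix k ι F) : Submodule F (ι → F) :=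
  Submodule.span F (Set.range fun i => G i)

/-- The dual of a linear code under the standard dot product. -/
def dualCode {F : Type*} [Field F] {ι : Type*} [Fintype ι] (C : Submodule F (ι → F)) :
    Submodule F (ι → F) where
  carrier := {v | ∀ c ∈ C, v ⬝ᵥ c = 0}
  add_mem' := by
    intro a b ha hb c hc
    rw [add_dotProduct, ha c hc, hb c hc, add_zero]
  zero_mem' := by
    intro c hc
    rw [zero_dotProduct]
  smul_mem' := by
    intro r a ha c hc
    rw [smul_dotProduct, ha c hc, smul_zero]

/-- A linear code is LCD (linear complementary dual) if it meets its dual trivially. -/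
def IsLCD {F : Type*} [Field F] {ι : Type*} [Fintype ι] (C : Submodule F (ι → F)) : Prop :=
  C ⊓ dualCode C = ⊥

/-!
Put `A = W + α I`. Skewness turns `W Wᵀ = m I` into `A Aᵀ = (m + α²) I`, hence
`G Gᵀ = (m + α² + 1) I` is invertible, and by Massey's criterion the rows of `G` are independent
and span an LCD code. For `β = -(m + α²)` one gets `Ḡ Gᵀ = A Aᵀ + β I = 0` and
`Ḡ Ḡᵀ = (m + α²)(m + α² + 1) I`, so the rows of `Ḡ` span an `n`-dimensional subspace of `C⊥`,
which has dimension `2n - n`.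
-/

section Codes

variable {F : Type*} [Field F] {k ι : Type*} [Fintype ι]

theorem mem_dualCode_rowSpan_iff (M : Matrix k ι F) (v : ι → F) :
    v ∈ dualCode (rowSpan F M) ↔ M *ᵥ v = 0 := by
  refine ⟨fun h => funext fun i => ?_, fun h c hc => ?_⟩
  · exact (dotProduct_comm _ _).trans (h (M i) (Submodule.subset_span ⟨i, rfl⟩))
  · induction hc using Submodule.span_induction with
    | mem x hx =>
      obtain ⟨i, rfl⟩ := hx
      rw [dotProduct_comm]
      exact congrFun h i
    | zero => exact dotProduct_zero v
    | add x y _ _ hx hy => rw [dotProduct_add, hx, hy, add_zero]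
    | smul r x _ hx => rw [dotProduct_smul, hx, smul_zero]

theorem dualCode_rowSpan_eq_ker (M : Matrix k ι F) :
    dualCode (rowSpan F M) = LinearMap.ker M.mulVecLin := by
  ext v
  rw [mem_dualCode_rowSpan_iff, LinearMap.mem_ker, mulVecLin_apply]

theorem finrank_rowSpan [Finite k] (M : Matrix k ι F) :
    Module.finrank F (rowSpan F M) = M.rank :=
  (rank_eq_finrank_span_row M).symm

theorem rank_add_finrank_dualCode_rowSpan (M : Matrix k ι F) :
    M.rank + Module.finrank F (dualCode (rowSpan F M)) = Fintype.card ι := by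
  rw [dualCode_rowSpan_eq_ker, rank, LinearMap.finrank_range_add_finrank_ker,
    Module.finrank_fintype_fun_eq_card]

/-- Massey's criterion. -/
theorem isLCD_rowSpan_of_isUnit_mul_transpose [Fintype k] [DecidableEq k] (M : Matrix k ι F)
    (h : IsUnit (M * Mᵀ)) : IsLCD (rowSpan F M) := by
  rw [IsLCD, Submodule.eq_bot_iff]
  rintro x ⟨hx, hx_dual⟩
  obtain ⟨g, rfl⟩ := (Submodule.mem_span_range_iff_exists_fun F).mp hx
  have hvec : (∑ i, g i • M i) = Mᵀ *ᵥ g := by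
    ext j
    simp [mulVec, dotProduct, Finset.sum_apply, mul_comm]
  rw [hvec] at hx_dual ⊢
  rw [SetLike.mem_coe, mem_dualCode_rowSpan_iff, mulVec_mulVec] at hx_dual
  rw [(mulVec_injective_iff_isUnit.mpr h).eq_iff' (mulVec_zero _) |>.mp hx_dual, mulVec_zero]

theorem rowSpan_eq_dualCode_of_mul_transpose_eq_zero {k' : Type*} [Finite k']
    (N : Matrix k' ι F) (M : Matrix k ι F) (hNM : N * Mᵀ = 0)
    (hrank : N.rank + M.rank = Fintype.card ι) :
    rowSpan F N = dualCode (rowSpan F M) := by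
  have hle : rowSpan F N ≤ dualCode (rowSpan F M) := by
    refine Submodule.span_le.mpr ?_
    rintro _ ⟨i, rfl⟩
    rw [SetLike.mem_coe, mem_dualCode_rowSpan_iff]
    ext j
    simpa [mulVec, mul_apply, dotProduct, mul_comm] using congrFun (congrFun hNM i) j
  refine Submodule.eq_of_le_of_finrank_eq hle ?_
  have := rank_add_finrank_dualCode_rowSpan M
  rw [finrank_rowSpan]
  omega

end Codes

section SkewWeighing

variable {R : Type*} [CommRing R] {n : Type*} [Fintype n] [DecidableEq n]

theorem add_smul_one_mul_transpose_of_transpose_eq_neg (S : Matrix n n R) (c α : R)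
    (hS : S * Sᵀ = c • 1) (hskew : Sᵀ = -S) :
    (S + α • 1) * (S + α • 1)ᵀ = (c + α ^ 2) • 1 := by
  rw [transpose_add, transpose_smul, transpose_one, add_mul, mul_add, mul_add, hS, hskew]
  simp only [Matrix.smul_mul, Matrix.mul_smul, mul_one, one_mul, mul_neg]
  module

theorem map_intCast_mul_transpose {m : ℤ} (W : Matrix n n ℤ) (hW : W * Wᵀ = m • 1) :
    W.map (Int.cast : ℤ → R) * (W.map (Int.cast : ℤ → R))ᵀ = (m : R) • 1 := by
  have h := congrArg (Int.castRingHom R).mapMatrix hW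
  rw [map_mul, map_zsmul, map_one, ← Int.cast_smul_eq_zsmul R, RingHom.mapMatrix_apply,
    RingHom.mapMatrix_apply, transpose_map] at h
  exact h

end SkewWeighing

theorem isUnit_smul_one {K A : Type*} [Semifield K] [Semiring A] [Algebra K A] {c : K} (hc : c ≠ 0) :
    IsUnit (c • (1 : A)) := by
  rw [← Algebra.algebraMap_eq_smul_one]
  exact (IsUnit.mk0 c hc).map (algebraMap K A)

theorem rank_eq_card_of_isUnit_mul_transpose {R : Type*} [CommRing R] [StrongRankCondition R]
    {k ι : Type*} [Fintype k] [DecidableEq k] [Fintype ι] (M : Matrix k ι R)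
    (h : IsUnit (M * Mᵀ)) : M.rank = Fintype.card k :=
  le_antisymm M.rank_le_card_height <|
    (rank_of_isUnit _ h).symm.le.trans (rank_mul_le_left M Mᵀ)

theorem fromCols_mul_transpose_fromCols {R : Type*} [CommRing R] {k k' ι ι' : Type*}
    [Fintype ι] [Fintype ι'] (A : Matrix k ι R) (B : Matrix k ι' R) (A' : Matrix k' ι R)
    (B' : Matrix k' ι' R) :
    fromCols A B * (fromCols A' B')ᵀ = A * A'ᵀ + B * B'ᵀ := by
  rw [transpose_fromCols, fromCols_mul_fromRows]

theorem statement8_general {F : Type*} [Field F] {n m : ℕ}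
    (W : Matrix (Fin n) (Fin n) ℤ)
    (hW : W * Wᵀ = (m : ℤ) • (1 : Matrix (Fin n) (Fin n) ℤ))
    (hskew : Wᵀ = -W)
    (α β : F)
    (h1 : (m : F) + α ^ 2 + 1 ≠ 0)
    (G Gbar : Matrix (Fin n) (Fin n ⊕ Fin n) F)
    (hG : G = Matrix.fromCols
      (W.map (Int.cast : ℤ → F) + α • (1 : Matrix (Fin n) (Fin n) F))
      (1 : Matrix (Fin n) (Fin n) F))
    (hGbar : Gbar = Matrix.fromCols
      (W.map (Int.cast : ℤ → F) + α • (1 : Matrix (Fin n) (Fin n) F))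
      (β • (1 : Matrix (Fin n) (Fin n) F))) :
    (IsLCD (rowSpan F G) ∧ Module.finrank F (rowSpan F G) = n) ∧
    ((m : F) + α ^ 2 ≠ 0 → β + α ^ 2 + (m : F) = 0 →
      rowSpan F Gbar = dualCode (rowSpan F G)) := by
  have hA : (W.map (Int.cast : ℤ → F) + α • 1) * (W.map (Int.cast : ℤ → F) + α • 1)ᵀ =
      ((m : F) + α ^ 2) • 1 := by
    refine add_smul_one_mul_transpose_of_transpose_eq_neg _ _ _ ?_ ?_
    · simpa using map_intCast_mul_transpose (R := F) W hW
    · rw [← transpose_map, hskew, Matrix.map_neg _ Int.cast_neg]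
  have hGG : G * Gᵀ = ((m : F) + α ^ 2 + 1) • 1 := by
    rw [hG, fromCols_mul_transpose_fromCols, hA, transpose_one, one_mul]
    module
  have hGunit : IsUnit (G * Gᵀ) := hGG ▸ isUnit_smul_one h1
  refine ⟨⟨isLCD_rowSpan_of_isUnit_mul_transpose G hGunit, ?_⟩, fun h2 h3 => ?_⟩
  · rw [finrank_rowSpan, rank_eq_card_of_isUnit_mul_transpose G hGunit, Fintype.card_fin]
  have hβ : β = -((m : F) + α ^ 2) := by linear_combination h3
  have hGbarG : Gbar * Gᵀ = 0 := by
    rw [hGbar, hG, fromCols_mul_transpose_fromCols, hA, transpose_one, mul_one, hβ, neg_smul,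
      add_neg_cancel]
  have hGbarGbar : Gbar * Gbarᵀ = (((m : F) + α ^ 2) * ((m : F) + α ^ 2 + 1)) • 1 := by
    rw [hGbar, fromCols_mul_transpose_fromCols, hA, transpose_smul, transpose_one,
      Matrix.smul_mul, Matrix.one_mul, smul_smul, hβ]
    module
  refine rowSpan_eq_dualCode_of_mul_transpose_eq_zero Gbar G hGbarG ?_
  rw [rank_eq_card_of_isUnit_mul_transpose Gbar (hGbarGbar ▸ isUnit_smul_one (mul_ne_zero h2 h1)),
    rank_eq_card_of_isUnit_mul_transpose G hGunit, Fintype.card_sum, Fintype.card_fin]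

/-- If `W` is a skew-weighing matrix `W(n,m)`, `α ∈ F` and
`G = [W + α·I_n | I_n]` over the finite field `F` with `m + α² + 1 ≠ 0` in `F`, then `G`
generates an LCD code `C` of length `2n` and dimension `n`; moreover if in addition
`m + α² ≠ 0` and `β + α² + m = 0` in `F`, then `Ḡ = [W + α·I_n | β·I_n]` generates `C⊥`. -/
theorem statement8 {F : Type*} [Field F] [Fintype F] {n m : ℕ}
    (W : Matrix (Fin n) (Fin n) ℤ)
    (hWent : ∀ i j, W i j = 0 ∨ W i j = 1 ∨ W i j = -1)
    (hW : W * Wᵀ = (m : ℤ) • (1 : Matrix (Fin n) (Fin n) ℤ))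
    (hskew : Wᵀ = -W)
    (α β : F)
    (h1 : (m : F) + α ^ 2 + 1 ≠ 0)
    (G Gbar : Matrix (Fin n) (Fin n ⊕ Fin n) F)
    (hG : G = Matrix.fromCols
      (W.map (Int.cast : ℤ → F) + α • (1 : Matrix (Fin n) (Fin n) F))
      (1 : Matrix (Fin n) (Fin n) F))
    (hGbar : Gbar = Matrix.fromCols
      (W.map (Int.cast : ℤ → F) + α • (1 : Matrix (Fin n) (Fin n) F))
      (β • (1 : Matrix (Fin n) (Fin n) F))) :
    (IsLCD (rowSpan F G) ∧ Module.finrank F (rowSpan F G) = n) ∧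
    ((m : F) + α ^ 2 ≠ 0 → β + α ^ 2 + (m : F) = 0 →
      rowSpan F Gbar = dualCode (rowSpan F G)) :=
  statement8_general W hW hskew α β h1 G Gbar hG hGbar
end

section
/- Let W be a weighing matrix W(n,m) and let G be a group of permutation automorphisms of W acting with t row orbits and t column orbits, all of the same length. Let R be the t×t row orbit matrix of W with respect to G and let B be a t×b point-by-block incidence matrix of an (r,λ)-design on t points. If (r + (t−1)λ + m) ≠ 0 and (r − λ + m) ≠ 0 in F_q, then A = [R|B] (entries reduced modulo p) generates an LCD code C of length t+b over F_q. -/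
open Matrix BigOperators

/-- `(σ, τ)` is a permutation automorphism of the square matrix `M` if permuting the rows
by `σ` and the columns by `τ` leaves `M` unchanged, i.e. `M (σ i) (τ j) = M i j`. -/
def IsPermAut {n : ℕ} {R : Type*} (M : Matrix (Fin n) (Fin n) R)
    (g : Equiv.Perm (Fin n) × Equiv.Perm (Fin n)) : Prop :=
  ∀ i j, M (g.1 i) (g.2 j) = M i j

/-!
By double counting over an orbit block (this is where equal orbit lengths enter), the entry
`Γ k j` of the row orbit matrix is also the sum of the column `z` of `W` over the `k`-th row orbit,
for any `z` in the `j`-th column orbit. Hence `(Γ Γᵀ) i k = ∑ x ∈ R k, (W Wᵀ) (ρ i) x = m δ_ik`,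
and over `F` we get `A Aᵀ = Γ Γᵀ + B Bᵀ = (r - λ + m) I + λ J`. This matrix is nonsingular
exactly when `r - λ + m` and `r + (t - 1) λ + m` are nonzero, and a code generated by `A` with
`A Aᵀ` nonsingular is LCD: a word `cᵀ A` orthogonal to all rows of `A` has `A Aᵀ c = 0`.
-/

theorem sum_sum_eq_sum_of_existsUnique_mem {ι X M : Type*} [Fintype ι] [Fintype X]
    [AddCommMonoid M] {S : ι → Finset X} (hS : ∀ x, ∃! i, x ∈ S i) (f : X → M) :
    ∑ i, ∑ x ∈ S i, f x = ∑ x, f x := by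
  classical
  rw [← Finset.sum_biUnion]
  · congr
    ext x
    simpa using (hS x).exists
  · intro i _ j _ hij
    exact Finset.disjoint_left.2 fun x hi hj => hij ((hS x).unique hi hj)

theorem apply_mem_iff_of_isOrbit {H X : Type*} [Group H] {G : Subgroup H}
    (φ : H →* Equiv.Perm X) {S : Finset X} (hS : ∀ x ∈ S, ∀ u, u ∈ S ↔ ∃ g ∈ G, φ g x = u)
    {g : H} (hg : g ∈ G) (x : X) : φ g x ∈ S ↔ x ∈ S := by
  exact ⟨fun h => (hS _ h x).2 ⟨g⁻¹, inv_mem hg, by simp⟩, fun h => (hS x h _).2 ⟨g, hg, rfl⟩⟩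

theorem isLCD_rowSpan_of_mul_transpose_mulVec_eq_zero {F : Type*} [Field F] {k ι : Type*}
    [Fintype k] [Fintype ι] (A : Matrix k ι F) (hA : ∀ c, (A * Aᵀ) *ᵥ c = 0 → c = 0) :
    IsLCD (rowSpan F A) := by
  rw [IsLCD, Submodule.eq_bot_iff]
  rintro v ⟨hv, hv_dual⟩
  obtain ⟨c, rfl⟩ := (Submodule.mem_span_range_iff_exists_fun F).1 hv
  rw [← vecMul_eq_sum, ← mulVec_transpose] at hv_dual ⊢
  have hc : (A * Aᵀ) *ᵥ c = 0 := by
    ext i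
    rw [← mulVec_mulVec, mulVec, dotProduct_comm]
    exact hv_dual (A i) (Submodule.subset_span ⟨i, rfl⟩)
  rw [hA c hc, mulVec_zero]

theorem eq_zero_of_smul_one_add_const_mulVec_eq_zero {F : Type*} [Field F] {ι : Type*}
    [Fintype ι] [DecidableEq ι] {a μ : F} (ha : a ≠ 0) (haμ : a + Fintype.card ι * μ ≠ 0)
    {c : ι → F} (hc : (a • (1 : Matrix ι ι F) + of fun _ _ => μ) *ᵥ c = 0) : c = 0 := by
  have hentry : ∀ i, a * c i + μ * ∑ j, c j = 0 := fun i => by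
    simpa [mulVec, dotProduct, one_apply, add_mul, Finset.sum_add_distrib, ite_mul,
      Finset.mul_sum] using congrFun hc i
  have hsum : ∑ j, c j = 0 := by
    have h := Finset.sum_eq_zero fun i (_ : i ∈ Finset.univ) => hentry i
    rw [Finset.sum_add_distrib, ← Finset.mul_sum, Finset.sum_const, Finset.card_univ,
      nsmul_eq_mul] at h
    exact (mul_eq_zero.1 (by linear_combination h : (a + Fintype.card ι * μ) * ∑ j, c j = 0)
      ).resolve_left haμ
  funext i
  simpa [hsum, ha] using hentry i

theorem fromCols_map_intCast_mul_transpose {F : Type*} [Ring F] {k ι κ : Type*}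
    [Fintype ι] [Fintype κ]
    (M : Matrix k ι ℤ) (N : Matrix k κ ℤ) :
    fromCols (M.map (Int.cast : ℤ → F)) (N.map Int.cast)
      * (fromCols (M.map (Int.cast : ℤ → F)) (N.map Int.cast))ᵀ
      = (M * Mᵀ + N * Nᵀ).map Int.cast := by
  rw [transpose_fromCols, fromCols_mul_fromRows, ← transpose_map, ← transpose_map,
    Matrix.map_add _ Int.cast_add]
  exact congrArg₂ (· + ·) (Matrix.map_mul (f := Int.castRingHom F)).symm
    (Matrix.map_mul (f := Int.castRingHom F)).symm

def rowOrbitMatrix {n t : ℕ} (W : Matrix (Fin n) (Fin n) ℤ) (C : Fin t → Finset (Fin n))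
    (ρ : Fin t → Fin n) : Matrix (Fin t) (Fin t) ℤ :=
  of fun i j => ∑ z ∈ C j, W (ρ i) z

section RowOrbitMatrix

variable {n t l : ℕ} {W : Matrix (Fin n) (Fin n) ℤ}
  {G : Subgroup (Equiv.Perm (Fin n) × Equiv.Perm (Fin n))} {R C : Fin t → Finset (Fin n)}
  {ρ : Fin t → Fin n}

theorem sum_mem_colOrbit_eq_rowOrbitMatrix (hG : ∀ g ∈ G, IsPermAut W g)
    (hRorb : ∀ i, ∀ x ∈ R i, ∀ u, u ∈ R i ↔ ∃ g ∈ G, g.1 x = u)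
    (hCorb : ∀ j, ∀ y ∈ C j, ∀ z, z ∈ C j ↔ ∃ g ∈ G, g.2 y = z) (hρ : ∀ i, ρ i ∈ R i)
    {i : Fin t} {x : Fin n} (hx : x ∈ R i) (j : Fin t) :
    ∑ z ∈ C j, W x z = rowOrbitMatrix W C ρ i j := by
  obtain ⟨g, hg, rfl⟩ := (hRorb i (ρ i) (hρ i) x).1 hx
  exact (Finset.sum_equiv g.2
    (fun z => (apply_mem_iff_of_isOrbit (MonoidHom.snd _ _) (hCorb j) hg z).symm)
    (fun z _ => (hG g hg (ρ i) z).symm)).symm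

theorem sum_mem_rowOrbit_eq_of_mem_colOrbit (hG : ∀ g ∈ G, IsPermAut W g)
    (hRorb : ∀ i, ∀ x ∈ R i, ∀ u, u ∈ R i ↔ ∃ g ∈ G, g.1 x = u)
    (hCorb : ∀ j, ∀ y ∈ C j, ∀ z, z ∈ C j ↔ ∃ g ∈ G, g.2 y = z)
    (k : Fin t) {j : Fin t} {z z' : Fin n} (hz : z ∈ C j) (hz' : z' ∈ C j) :
    ∑ x ∈ R k, W x z = ∑ x ∈ R k, W x z' := by
  obtain ⟨g, hg, rfl⟩ := (hCorb j z hz z').1 hz'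
  exact Finset.sum_equiv g.1
    (fun x => (apply_mem_iff_of_isOrbit (MonoidHom.fst _ _) (hRorb k) hg x).symm)
    (fun x _ => (hG g hg x z).symm)

theorem sum_mem_rowOrbit_eq_rowOrbitMatrix (hG : ∀ g ∈ G, IsPermAut W g)
    (hRorb : ∀ i, ∀ x ∈ R i, ∀ u, u ∈ R i ↔ ∃ g ∈ G, g.1 x = u)
    (hCorb : ∀ j, ∀ y ∈ C j, ∀ z, z ∈ C j ↔ ∃ g ∈ G, g.2 y = z)
    (hRlen : ∀ i, (R i).card = l) (hClen : ∀ j, (C j).card = l) (hρ : ∀ i, ρ i ∈ R i)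
    (k : Fin t) {j : Fin t} {z : Fin n} (hz : z ∈ C j) :
    ∑ x ∈ R k, W x z = rowOrbitMatrix W C ρ k j := by
  have hl : (l : ℤ) ≠ 0 := by
    rw [← hRlen k]
    exact_mod_cast (Finset.card_pos.2 ⟨ρ k, hρ k⟩).ne'
  refine mul_left_cancel₀ hl ?_
  calc (l : ℤ) * ∑ x ∈ R k, W x z
      = ∑ z' ∈ C j, ∑ x ∈ R k, W x z' := by
        rw [Finset.sum_congr rfl fun z' hz' =>
          sum_mem_rowOrbit_eq_of_mem_colOrbit hG hRorb hCorb k hz' hz,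
          Finset.sum_const, hClen, nsmul_eq_mul]
    _ = ∑ x ∈ R k, ∑ z' ∈ C j, W x z' := Finset.sum_comm
    _ = (l : ℤ) * rowOrbitMatrix W C ρ k j := by
        rw [Finset.sum_congr rfl fun x hx =>
          sum_mem_colOrbit_eq_rowOrbitMatrix hG hRorb hCorb hρ hx j,
          Finset.sum_const, hRlen, nsmul_eq_mul]

theorem rowOrbitMatrix_mul_transpose_apply (hG : ∀ g ∈ G, IsPermAut W g)
    (hRorb : ∀ i, ∀ x ∈ R i, ∀ u, u ∈ R i ↔ ∃ g ∈ G, g.1 x = u)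
    (hCorb : ∀ j, ∀ y ∈ C j, ∀ z, z ∈ C j ↔ ∃ g ∈ G, g.2 y = z)
    (hCpart : ∀ y : Fin n, ∃! j, y ∈ C j)
    (hRlen : ∀ i, (R i).card = l) (hClen : ∀ j, (C j).card = l) (hρ : ∀ i, ρ i ∈ R i)
    (i k : Fin t) :
    (rowOrbitMatrix W C ρ * (rowOrbitMatrix W C ρ)ᵀ) i k = ∑ x ∈ R k, (W * Wᵀ) (ρ i) x := by
  calc (rowOrbitMatrix W C ρ * (rowOrbitMatrix W C ρ)ᵀ) i k
      = ∑ j, ∑ z ∈ C j, W (ρ i) z * ∑ x ∈ R k, W x z := by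
        rw [mul_apply]
        refine Finset.sum_congr rfl fun j _ => ?_
        rw [transpose_apply, rowOrbitMatrix, of_apply, Finset.sum_mul]
        refine Finset.sum_congr rfl fun z hz => ?_
        rw [sum_mem_rowOrbit_eq_rowOrbitMatrix hG hRorb hCorb hRlen hClen hρ k hz]
        rfl
    _ = ∑ z, W (ρ i) z * ∑ x ∈ R k, W x z := sum_sum_eq_sum_of_existsUnique_mem hCpart _
    _ = ∑ x ∈ R k, (W * Wᵀ) (ρ i) x := by
        simp_rw [Finset.mul_sum, mul_apply, transpose_apply]
        exact Finset.sum_comm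

theorem rowOrbitMatrix_mul_transpose {m : ℤ} (hW : W * Wᵀ = m • 1)
    (hG : ∀ g ∈ G, IsPermAut W g)
    (hRorb : ∀ i, ∀ x ∈ R i, ∀ u, u ∈ R i ↔ ∃ g ∈ G, g.1 x = u)
    (hRpart : ∀ x : Fin n, ∃! i, x ∈ R i)
    (hCorb : ∀ j, ∀ y ∈ C j, ∀ z, z ∈ C j ↔ ∃ g ∈ G, g.2 y = z)
    (hCpart : ∀ y : Fin n, ∃! j, y ∈ C j)
    (hRlen : ∀ i, (R i).card = l) (hClen : ∀ j, (C j).card = l) (hρ : ∀ i, ρ i ∈ R i) :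
    rowOrbitMatrix W C ρ * (rowOrbitMatrix W C ρ)ᵀ = m • 1 := by
  ext i k
  have hmem : ρ i ∈ R k ↔ i = k :=
    ⟨fun h => (hRpart (ρ i)).unique (hρ i) h, fun h => h ▸ hρ i⟩
  rw [rowOrbitMatrix_mul_transpose_apply hG hRorb hCorb hCpart hRlen hClen hρ, hW]
  simp [one_apply, Finset.sum_ite_eq, hmem]

end RowOrbitMatrix

theorem statement18_general {F : Type*} [Field F] {n m t b r lam l : ℕ}
    (W : Matrix (Fin n) (Fin n) ℤ)
    (hW : W * Wᵀ = (m : ℤ) • (1 : Matrix (Fin n) (Fin n) ℤ))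
    (G : Subgroup (Equiv.Perm (Fin n) × Equiv.Perm (Fin n)))
    (hG : ∀ g ∈ G, IsPermAut W g)
    (R : Fin t → Finset (Fin n))
    (hRorb : ∀ i, ∀ x ∈ R i, ∀ u, u ∈ R i ↔ ∃ g ∈ G, g.1 x = u)
    (hRpart : ∀ x : Fin n, ∃! i, x ∈ R i)
    (C : Fin t → Finset (Fin n))
    (hCorb : ∀ j, ∀ y ∈ C j, ∀ z, z ∈ C j ↔ ∃ g ∈ G, g.2 y = z)
    (hCpart : ∀ y : Fin n, ∃! j, y ∈ C j)
    (hRlen : ∀ i, (R i).card = l) (hClen : ∀ j, (C j).card = l)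
    (ρ : Fin t → Fin n) (hρ : ∀ i, ρ i ∈ R i)
    (B : Matrix (Fin t) (Fin b) ℤ)
    (hB : B * Bᵀ = ((r : ℤ) - (lam : ℤ)) • (1 : Matrix (Fin t) (Fin t) ℤ)
          + Matrix.of (fun _ _ => (lam : ℤ)))
    (h1 : (r : F) + ((t : F) - 1) * (lam : F) + (m : F) ≠ 0)
    (h2 : (r : F) - (lam : F) + (m : F) ≠ 0)
    (A : Matrix (Fin t) (Fin t ⊕ Fin b) F)
    (hA : A = Matrix.fromCols
      ((Matrix.of fun i j => ∑ z ∈ C j, W (ρ i) z).map (Int.cast : ℤ → F))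
      (B.map (Int.cast : ℤ → F))) :
    IsLCD (rowSpan F A) := by
  have hΓ : rowOrbitMatrix W C ρ * (rowOrbitMatrix W C ρ)ᵀ = (m : ℤ) • 1 :=
    rowOrbitMatrix_mul_transpose hW hG hRorb hRpart hCorb hCpart hRlen hClen hρ
  have hA' : A = fromCols ((rowOrbitMatrix W C ρ).map Int.cast) (B.map Int.cast) := hA
  have hAA : A * Aᵀ = ((r : F) - lam + m) • 1 + of fun _ _ => (lam : F) := by
    rw [hA', fromCols_map_intCast_mul_transpose, hΓ, hB]
    ext i k
    simp only [map_apply, Matrix.add_apply, Matrix.smul_apply, one_apply, of_apply, smul_eq_mul]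
    split_ifs <;> push_cast <;> ring
  refine isLCD_rowSpan_of_mul_transpose_mulVec_eq_zero A fun c hc => ?_
  refine eq_zero_of_smul_one_add_const_mulVec_eq_zero h2 ?_ (hAA ▸ hc)
  rw [Fintype.card_fin]
  exact fun h => h1 (by linear_combination h)

/-- Let `W` be a weighing matrix `W(n,m)` and let `G` be a group of
permutation automorphisms of `W` acting with `t` row orbits and `t` column orbits, all of
the same length `l`.  Let `R` be the `t × t` row orbit matrix of `W` and `B` the `t × b`
incidence matrix of an `(r,λ)`-design on `t` points.  If `r + (t-1)λ + m ≠ 0` and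
`r - λ + m ≠ 0` in `F`, then `A = [R | B]` generates an LCD code of length `t + b`
over `F`. -/
theorem statement18 {F : Type*} [Field F] [Fintype F] {n m t b r lam l : ℕ}
    (hr : 0 < r) (hlam : 0 < lam)
    (W : Matrix (Fin n) (Fin n) ℤ)
    (hWent : ∀ i j, W i j = 0 ∨ W i j = 1 ∨ W i j = -1)
    (hW : W * Wᵀ = (m : ℤ) • (1 : Matrix (Fin n) (Fin n) ℤ))
    (G : Subgroup (Equiv.Perm (Fin n) × Equiv.Perm (Fin n)))
    (hG : ∀ g ∈ G, IsPermAut W g)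
    (R : Fin t → Finset (Fin n))
    (hRorb : ∀ i, ∀ x ∈ R i, ∀ u, u ∈ R i ↔ ∃ g ∈ G, g.1 x = u)
    (hRpart : ∀ x : Fin n, ∃! i, x ∈ R i)
    (C : Fin t → Finset (Fin n))
    (hCorb : ∀ j, ∀ y ∈ C j, ∀ z, z ∈ C j ↔ ∃ g ∈ G, g.2 y = z)
    (hCpart : ∀ y : Fin n, ∃! j, y ∈ C j)
    (hRlen : ∀ i, (R i).card = l) (hClen : ∀ j, (C j).card = l)
    (ρ : Fin t → Fin n) (hρ : ∀ i, ρ i ∈ R i)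
    (B : Matrix (Fin t) (Fin b) ℤ)
    (hBent : ∀ i j, B i j = 0 ∨ B i j = 1)
    (hB : B * Bᵀ = ((r : ℤ) - (lam : ℤ)) • (1 : Matrix (Fin t) (Fin t) ℤ)
          + Matrix.of (fun _ _ => (lam : ℤ)))
    (h1 : (r : F) + ((t : F) - 1) * (lam : F) + (m : F) ≠ 0)
    (h2 : (r : F) - (lam : F) + (m : F) ≠ 0)
    (A : Matrix (Fin t) (Fin t ⊕ Fin b) F)
    (hA : A = Matrix.fromCols
      ((Matrix.of fun i j => ∑ z ∈ C j, W (ρ i) z).map (Int.cast : ℤ → F))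
      (B.map (Int.cast : ℤ → F))) :
    IsLCD (rowSpan F A) :=
  statement18_general W hW G hG R hRorb hRpart C hCorb hCpart hRlen hClen ρ hρ B hB h1 h2 A hA
end
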